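/- If f : {-1,1}^n → ℝ can be computed by a decision tree of depth d, then every Fourier coefficient f̂(S) with |S| > d is zero. -/

import Mathlib

noncomputable def chi {n : ℕ} (S : Finset (Fin n)) (x : Fin n → Bool) : ℝ :=
  ∏ i ∈ S, (if x i then 1 else -1)

noncomputable def fourierCoef {n : ℕ} (f : (Fin n → Bool) → ℝ) (S : Finset (Fin n)) : ℝ :=
  (∑ x : Fin n → Bool, f x * chi S x) / 2 ^ n

/-- Decision trees over n Boolean variables with real-valued leaves. -/
inductive DTree (n : ℕ) where
  | leaf : ℝ → DTree n
  | node : Fin n → DTree n → DTree n → DTree n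

noncomputable def DTree.eval {n : ℕ} : DTree n → (Fin n → Bool) → ℝ
  | .leaf r, _ => r
  | .node i t f, x => if x i then t.eval x else f.eval x

def DTree.depth {n : ℕ} : DTree n → ℕ
  | .leaf _ => 0
  | .node _ t f => max t.depth f.depth + 1

/-! Branching on `x i` writes the value of a node as `((g + h) + χ_{i} (g - h)) / 2`, where
`g`, `h` are the two subtrees, and multiplying by `χ_{i}` moves the coefficient at `S` to
`{i} ∆ S`, a set of size at least `|S| - 1`. So each level of the tree raises the Fourier degree
by at most one, and a leaf, being constant, has degree zero. -/

open Finset symmDiff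

section

variable {n : ℕ}

lemma chi_eq_prod_univ (S : Finset (Fin n)) (x : Fin n → Bool) :
    chi S x = ∏ i, if i ∈ S then (if x i then 1 else -1 : ℝ) else 1 :=
  (Fintype.prod_ite_mem S _).symm

lemma chi_mul_chi (U V : Finset (Fin n)) (x : Fin n → Bool) :
    chi U x * chi V x = chi (U ∆ V) x := by
  simp only [chi_eq_prod_univ, ← prod_mul_distrib]
  refine prod_congr rfl fun i _ => ?_
  by_cases hU : i ∈ U <;> by_cases hV : i ∈ V <;> cases x i <;> simp [mem_symmDiff, hU, hV]

lemma sum_chi_eq_zero {S : Finset (Fin n)} (hS : S.Nonempty) : ∑ x, chi S x = 0 := by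
  obtain ⟨i, hi⟩ := hS
  have hfactor :
      ∑ x, chi S x = ∏ j, ∑ b : Bool, if j ∈ S then (if b then 1 else -1 : ℝ) else 1 := by
    rw [Fintype.prod_sum]
    simp only [chi_eq_prod_univ]
  rw [hfactor]
  exact prod_eq_zero (mem_univ i) (by simp [hi])

lemma fourierCoef_const (r : ℝ) {S : Finset (Fin n)} (hS : S.Nonempty) :
    fourierCoef (fun _ => r) S = 0 := by
  simp [fourierCoef, ← mul_sum, sum_chi_eq_zero hS]

lemma fourierCoef_ite (i : Fin n) (g h : (Fin n → Bool) → ℝ) (S : Finset (Fin n)) :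
    fourierCoef (fun x => if x i then g x else h x) S =
      (fourierCoef g S + fourierCoef h S
        + fourierCoef g ({i} ∆ S) - fourierCoef h ({i} ∆ S)) / 2 := by
  have hsplit : ∀ x, (if x i then g x else h x) * chi S x =
      ((g x + h x) * chi S x + (g x - h x) * chi ({i} ∆ S) x) / 2 := by
    intro x
    rw [← chi_mul_chi, show chi {i} x = if x i then 1 else -1 from prod_singleton _ _]
    split_ifs <;> ring
  simp only [fourierCoef, hsplit, ← sum_div, sum_add_distrib, add_mul, sub_mul, sum_sub_distrib]
  ring

lemma Finset.card_le_card_symmDiff_add_card {α : Type*} [DecidableEq α] (s t : Finset α) :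
    s.card ≤ (t ∆ s).card + t.card :=
  calc s.card ≤ (t ∆ s ∪ t).card := card_le_card fun a ha => by
        by_cases hat : a ∈ t <;> simp [mem_symmDiff, ha, hat]
    _ ≤ (t ∆ s).card + t.card := card_union_le _ _

theorem DTree.fourierCoef_eval_eq_zero (T : DTree n) {d : ℕ} (hT : T.depth ≤ d)
    {S : Finset (Fin n)} (hS : d < S.card) : fourierCoef T.eval S = 0 := by
  induction T generalizing d S with
  | leaf r => exact fourierCoef_const r (card_pos.mp (by omega))
  | node i t f iht ihf =>
    simp only [depth] at hT
    obtain ⟨d, rfl⟩ : ∃ d', d = d' + 1 := ⟨d - 1, by omega⟩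
    have ht : t.depth ≤ d := by omega
    have hf : f.depth ≤ d := by omega
    have hS' : d < ({i} ∆ S).card := by
      have := card_le_card_symmDiff_add_card S {i}
      rw [card_singleton] at this
      omega
    change fourierCoef (fun x => if x i then t.eval x else f.eval x) S = 0
    rw [fourierCoef_ite, iht ht (by omega), ihf hf (by omega), iht ht hS', ihf hf hS']
    norm_num

end

/-- If f is computed by a decision tree of depth at most d, then all Fourier
coefficients of degree greater than d vanish. -/
theorem decision_tree_fourier_degree {n d : ℕ} (f : (Fin n → Bool) → ℝ)
    (T : DTree n) (hdepth : T.depth ≤ d) (hcomp : ∀ x, f x = T.eval x) :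
    ∀ S : Finset (Fin n), d < S.card → fourierCoef f S = 0 := by
  intro S hS
  rw [funext hcomp]
  exact T.fourierCoef_eval_eq_zero hdepth hS
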